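/- For all complex z with |z - 1/2| ≤ 1/2, z ≠ 0, z ≠ 1, and all integers n ≥ 2, the strict inequality |z^n - 1| > |z - 1| holds. -/

import Mathlib

/-!
Write `r = ‖z‖`. The disk is `r ^ 2 ≤ re z`, which gives `r < 1`, and the claim is
`r ^ 2 - 2 re z < r ^ (2n) - 2 re (z ^ n)`. If the direction of `z ^ n` is no closer to the
positive axis than that of `z` (`re (z ^ n) / r ^ n ≤ re z / r`), this follows from `r ^ n < r`.
Otherwise `cos (n arg z) > cos (arg z)`, which forces `|arg z| > 2π / (n + 1)`; as `|arg z| < π/2`,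
this gives `n ≥ 4` and `r ≤ cos (arg z) < cos (2π / (n + 1))`. So `r` is bounded away from `1`,
enough for `‖z - 1‖ ^ 2 ≤ 1 - r ^ 2 < (1 - r ^ n) ^ 2 ≤ ‖z ^ n - 1‖ ^ 2`.
-/

open Real

lemma norm_sub_one_sq (w : ℂ) : ‖w - 1‖ ^ 2 = ‖w‖ ^ 2 - 2 * w.re + 1 := by
  simp only [Complex.sq_norm, Complex.normSq_apply, Complex.sub_re, Complex.sub_im,
    Complex.one_re, Complex.one_im]
  ring

lemma sq_norm_le_re_of_norm_sub_half_le {z : ℂ} (hz : ‖z - 1 / 2‖ ≤ 1 / 2) :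
    ‖z‖ ^ 2 ≤ z.re := by
  have hsq : ‖z - 1 / 2‖ ^ 2 ≤ (1 / 2) ^ 2 := pow_le_pow_left₀ (norm_nonneg _) hz 2
  have hexp : ‖z - 1 / 2‖ ^ 2 = ‖z‖ ^ 2 - z.re + 1 / 4 := by
    simp only [Complex.sq_norm, Complex.normSq_apply, Complex.sub_re, Complex.sub_im,
      Complex.div_ofNat_re, Complex.div_ofNat_im, Complex.one_re, Complex.one_im]
    ring
  linarith

lemma norm_lt_one_of_sq_norm_le_re {z : ℂ} (hz : ‖z‖ ^ 2 ≤ z.re) (hz1 : z ≠ 1) : ‖z‖ < 1 := by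
  have hpos : 0 < ‖z - 1‖ ^ 2 := pow_pos (norm_pos_iff.2 (sub_ne_zero.2 hz1)) 2
  have := norm_sub_one_sq z
  nlinarith

lemma Complex.re_pow_eq_norm_pow_mul_cos (z : ℂ) (n : ℕ) :
    (z ^ n).re = ‖z‖ ^ n * Real.cos (n * z.arg) := by
  conv_lhs => rw [← Complex.norm_mul_cos_add_sin_mul_I z]
  rw [mul_pow, Complex.cos_add_sin_mul_I_pow, ← Complex.ofReal_pow, Complex.re_ofReal_mul,
    ← Complex.ofReal_natCast, ← Complex.ofReal_mul, ← Complex.ofReal_cos, ← Complex.ofReal_sin,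
    Complex.add_re, Complex.ofReal_re, Complex.re_ofReal_mul, Complex.I_re, mul_zero, add_zero]

lemma Real.cos_nat_mul_le_cos {m : ℕ} (hm : 1 ≤ m) {ψ : ℝ} (h : (m + 1) * |ψ| ≤ 2 * π) :
    cos (m * ψ) ≤ cos ψ := by
  rw [← cos_abs ψ, ← cos_abs (m * ψ), abs_mul, Nat.abs_cast]
  have hm1 : (1 : ℝ) ≤ m := by exact_mod_cast hm
  have hψ : 0 ≤ |ψ| := abs_nonneg ψ
  have hle : |ψ| ≤ m * |ψ| := le_mul_of_one_le_left hψ hm1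
  rcases le_or_gt (m * |ψ|) π with hπ | hπ
  · exact cos_le_cos_of_nonneg_of_le_pi hψ hπ hle
  · rw [← cos_two_pi_sub]
    exact cos_le_cos_of_nonneg_of_le_pi hψ (by linarith) (by linarith)

lemma one_le_mul_sin_pi_div {m : ℕ} (hm : 2 ≤ m) : 1 ≤ (m : ℝ) * sin (π / (m + 3)) := by
  have hm' : (2 : ℝ) ≤ m := by exact_mod_cast hm
  set t := π / (m + 3) with ht
  have htN : t * (m + 3) = π := div_mul_cancel₀ _ (by positivity)
  have ht0 : 0 < t := by positivity
  have ht1 : t ≤ 4 / 5 := by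
    rw [ht, div_le_iff₀ (by positivity)]; nlinarith [pi_lt_four]
  have hsin : t * (1 - t ^ 2 / 6) < sin t := by
    have := sin_gt_sub_cube ht0; linarith
  have hmt : 6 / 5 ≤ m * t := by
    nlinarith [pi_gt_three, mul_le_mul_of_nonneg_right hm' ht0.le]
  have hcube : 67 / 75 ≤ 1 - t ^ 2 / 6 := by nlinarith
  nlinarith [mul_le_mul hmt hcube (by norm_num) (by positivity)]

lemma pow_mul_one_add_mul_one_sub_le_one {r : ℝ} (h0 : 0 ≤ r) (h2 : r ≤ 2) (m : ℕ) :
    r ^ m * (1 + m * (1 - r)) ≤ 1 :=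
  calc r ^ m * (1 + m * (1 - r)) ≤ r ^ m * (1 + (1 - r)) ^ m :=
        mul_le_mul_of_nonneg_left (one_add_mul_le_pow (by linarith) m) (by positivity)
    _ = (r * (2 - r)) ^ m := by rw [mul_pow]; ring
    _ ≤ 1 := pow_le_one₀ (by nlinarith) (by nlinarith [sq_nonneg (1 - r)])

lemma one_sub_sq_lt_one_sub_pow_sq {r : ℝ} (h0 : 0 < r) (h1 : r < 1) {m : ℕ}
    (h : 1 + r < m ^ 2 * (1 - r)) : 1 - r ^ 2 < (1 - r ^ (m + 2)) ^ 2 := by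
  set u := √(1 - r ^ 2)
  have hu0 : 0 ≤ u := sqrt_nonneg _
  have hu2 : u ^ 2 = 1 - r ^ 2 := sq_sqrt (by nlinarith)
  have hu1 : u < 1 := by nlinarith
  have hum : u < m * (1 - r) :=
    lt_of_pow_lt_pow_left₀ 2 (by positivity) (by nlinarith)
  have hs : r ^ m * (1 + u) < 1 :=
    calc r ^ m * (1 + u) < r ^ m * (1 + m * (1 - r)) := by gcongr
      _ ≤ 1 := pow_mul_one_add_mul_one_sub_le_one h0.le (by linarith) m
  have hpow : r ^ (m + 2) < 1 - u :=
    calc r ^ (m + 2) = r ^ m * (1 + u) * (1 - u) := by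
          rw [pow_add]; linear_combination r ^ m * hu2
      _ < 1 - u := by nlinarith
  rw [← hu2]
  exact pow_lt_pow_left₀ (by linarith) hu0 two_ne_zero

lemma one_add_lt_sq_mul_one_sub_of_lt_cos {r : ℝ} (hr1 : r < 1) {m : ℕ} (hm : 2 ≤ m)
    (h : r < cos (2 * π / (m + 3))) : 1 + r < m ^ 2 * (1 - r) := by
  have hcos : cos (2 * π / (m + 3)) = 1 - 2 * sin (π / (m + 3)) ^ 2 := by
    rw [mul_div_assoc, cos_two_mul, cos_sq']; ring
  have hsin := one_le_mul_sin_pi_div hm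
  nlinarith [mul_le_mul hsin hsin zero_le_one (by linarith)]

lemma norm_sub_one_lt_norm_pow_sub_one_of_re_pow_le {z : ℂ} {n : ℕ} (hn : 2 ≤ n)
    (hdisk : ‖z‖ ^ 2 ≤ z.re) (hr0 : 0 < ‖z‖) (hr1 : ‖z‖ < 1)
    (h : (z ^ n).re * ‖z‖ ≤ z.re * ‖z‖ ^ n) : ‖z - 1‖ < ‖z ^ n - 1‖ := by
  set r := ‖z‖
  set v := r ^ (n - 1)
  have hrn : r ^ n = r * v := by rw [← pow_succ']; congr 1; omega
  have hv1 : v < 1 := pow_lt_one₀ hr0.le hr1 (by omega)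
  have hA : (z ^ n).re ≤ v * z.re := le_of_mul_le_mul_left (by rw [hrn] at h; linarith) hr0
  refine lt_of_pow_lt_pow_left₀ 2 (norm_nonneg _) ?_
  rw [norm_sub_one_sq, norm_sub_one_sq, norm_pow, hrn]
  nlinarith [mul_nonneg (sub_nonneg.2 hv1.le) (sub_nonneg.2 hdisk),
    mul_pos (pow_pos (sub_pos.2 hv1) 2) (pow_pos hr0 2)]

lemma two_pi_lt_mul_abs_arg_of_re_mul_lt {z : ℂ} (hz0 : z ≠ 0) {n : ℕ} (hn : 1 ≤ n)
    (h : z.re * ‖z‖ ^ n < (z ^ n).re * ‖z‖) : 2 * π < (n + 1) * |z.arg| := by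
  by_contra! hle
  have hcos := Real.cos_nat_mul_le_cos hn hle
  rw [← Complex.norm_mul_cos_arg z, Complex.re_pow_eq_norm_pow_mul_cos] at h
  have hr : 0 < ‖z‖ ^ n * ‖z‖ := by have := norm_pos_iff.2 hz0; positivity
  nlinarith [mul_le_mul_of_nonneg_left hcos hr.le]

lemma norm_sub_one_lt_norm_pow_sub_one_of_re_mul_lt {z : ℂ} {n : ℕ} (hn : 1 ≤ n)
    (hdisk : ‖z‖ ^ 2 ≤ z.re) (hr0 : 0 < ‖z‖) (hr1 : ‖z‖ < 1)
    (h : z.re * ‖z‖ ^ n < (z ^ n).re * ‖z‖) : ‖z - 1‖ < ‖z ^ n - 1‖ := by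
  set r := ‖z‖
  have hangle := two_pi_lt_mul_abs_arg_of_re_mul_lt (norm_pos_iff.1 hr0) hn h
  have harg : |z.arg| < π / 2 :=
    Complex.abs_arg_lt_pi_div_two_iff.2 (Or.inl ((pow_pos hr0 2).trans_le hdisk))
  have hn4 : 4 ≤ n := by
    have : (3 : ℝ) < n := by nlinarith [pi_pos]
    exact_mod_cast this
  obtain ⟨m, rfl⟩ : ∃ m, n = m + 2 := ⟨n - 2, by omega⟩
  have hN : ((m + 2 : ℕ) : ℝ) + 1 = m + 3 := by push_cast; ring
  rw [hN] at hangle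
  have hr_cos : r ≤ cos z.arg := by
    nlinarith [Complex.norm_mul_cos_arg z]
  have hcos_lt : cos z.arg < cos (2 * π / (m + 3)) := by
    rw [← cos_abs]
    exact cos_lt_cos_of_nonneg_of_le_pi (by positivity) (by linarith [pi_pos])
      ((div_lt_iff₀' (by positivity)).2 hangle)
  have hr := one_sub_sq_lt_one_sub_pow_sq hr0 hr1
    (one_add_lt_sq_mul_one_sub_of_lt_cos hr1 (by omega) (hr_cos.trans_lt hcos_lt))
  have hpow : 1 - r ^ (m + 2) ≤ ‖z ^ (m + 2) - 1‖ := by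
    simpa [norm_sub_rev, r] using norm_sub_norm_le (1 : ℂ) (z ^ (m + 2))
  refine lt_of_pow_lt_pow_left₀ 2 (norm_nonneg _) ?_
  calc ‖z - 1‖ ^ 2 ≤ 1 - r ^ 2 := by rw [norm_sub_one_sq]; linarith
    _ < (1 - r ^ (m + 2)) ^ 2 := hr
    _ ≤ ‖z ^ (m + 2) - 1‖ ^ 2 :=
      pow_le_pow_left₀ (sub_nonneg.2 (pow_le_one₀ hr0.le hr1.le)) hpow 2

theorem stmt2 (z : ℂ) (hz : ‖z - 1/2‖ ≤ 1/2) (hz0 : z ≠ 0) (hz1 : z ≠ 1)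
    (n : ℤ) (hn : 2 ≤ n) : ‖z - 1‖ < ‖z ^ n - 1‖ := by
  lift n to ℕ using by omega
  rw [zpow_natCast]
  have hn' : 2 ≤ n := by exact_mod_cast hn
  have hdisk := sq_norm_le_re_of_norm_sub_half_le hz
  have hr0 : 0 < ‖z‖ := norm_pos_iff.2 hz0
  have hr1 := norm_lt_one_of_sq_norm_le_re hdisk hz1
  rcases le_or_gt ((z ^ n).re * ‖z‖) (z.re * ‖z‖ ^ n) with h | h
  · exact norm_sub_one_lt_norm_pow_sub_one_of_re_pow_le hn' hdisk hr0 hr1 h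
  · exact norm_sub_one_lt_norm_pow_sub_one_of_re_mul_lt (by omega) hdisk hr0 hr1 h
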